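/- arXiv:1809.08453 — 2 statements merged into one kernel-verified Lean document; each statement's English description precedes it below -/
import Mathlib

section
/- Let μ and μ' be two stable matchings of the same stable marriage instance, let m be a man with w = μ(m), and suppose w ≻_m μ'(m). Then the woman w strictly prefers her partner in μ' to m, i.e., μ'⁻¹(w) ≻_w m. -/
/-- A stable marriage instance: finite sets `M` of men and `W` of women of equal
positive cardinality, with strict total preference orders for each agent. -/
structure SMInstance (M W : Type) [Fintype M] [Fintype W] where
  card_eq : Fintype.card M = Fintype.card W
  card_pos : 1 ≤ Fintype.card M
  prefM : M → W → W → Prop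
  prefW : W → M → M → Prop
  prefM_sto : ∀ m, IsStrictTotalOrder W (prefM m)
  prefW_sto : ∀ w, IsStrictTotalOrder M (prefW w)

/-- A pair `(m, w)` blocks the matching `μ` if `w ≻_m μ(m)` and `m ≻_w μ⁻¹(w)`. -/
def SMInstance.Blocks {M W : Type} [Fintype M] [Fintype W]
    (I : SMInstance M W) (μ : M ≃ W) (m : M) (w : W) : Prop :=
  I.prefM m w (μ m) ∧ I.prefW w m (μ.symm w)

/-- A matching is stable if no pair blocks it. -/
def SMInstance.Stable {M W : Type} [Fintype M] [Fintype W]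
    (I : SMInstance M W) (μ : M ≃ W) : Prop :=
  ∀ m w, ¬ I.Blocks μ m w

namespace SMInstance

variable {M W : Type} [Fintype M] [Fintype W] {I : SMInstance M W}

theorem ne_of_prefM {m : M} {w w' : W} (h : I.prefM m w w') : w ≠ w' := by
  have := I.prefM_sto m
  rintro rfl
  exact irrefl_of (I.prefM m) w h

theorem Stable.prefW_symm_of_prefM {μ : M ≃ W} (hμ : I.Stable μ)
    {m : M} {w : W} (hpref : I.prefM m w (μ m)) : I.prefW w (μ.symm w) m := by
  have := I.prefW_sto w
  have hpartner : μ.symm w ≠ m := by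
    rintro rfl
    exact ne_of_prefM hpref (μ.apply_symm_apply w).symm
  have hnot_blocks : ¬ I.prefW w m (μ.symm w) := fun h => hμ m w ⟨hpref, h⟩
  rcases trichotomous_of (I.prefW w) (μ.symm w) m with h | h | h
  · exact h
  · exact absurd h hpartner
  · exact absurd h hnot_blocks

end SMInstance

theorem woman_prefers_other_partner_general {M W : Type} [Fintype M] [Fintype W]
    (I : SMInstance M W) (μ' : M ≃ W) (hμ' : I.Stable μ')
    (m : M) (w : W) (hpref : I.prefM m w (μ' m)) :
    I.prefW w (μ'.symm w) m :=
  hμ'.prefW_symm_of_prefM hpref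

/-- If `μ` and `μ'` are stable matchings, `w = μ(m)` and `m` strictly prefers `w`
to `μ'(m)`, then `w` strictly prefers her partner in `μ'` to `m`. -/
theorem woman_prefers_other_partner {M W : Type} [Fintype M] [Fintype W]
    (I : SMInstance M W) (μ μ' : M ≃ W) (hμ : I.Stable μ) (hμ' : I.Stable μ')
    (m : M) (w : W) (hw : w = μ m) (hpref : I.prefM m w (μ' m)) :
    I.prefW w (μ'.symm w) m :=
  woman_prefers_other_partner_general I μ' hμ' m w hpref
end

section
/- Let n ≥ 2 be an integer and define Δ_u = Σ_{j=1}^{n} (n^j + n^{j+1})·(j + 1 + n^{−j}). Let S ⊆ {1,…,n} with |S| = k, let c : {1,…,n} \ S → ℝ satisfy c(j) ∈ {j + 1, j + 1 + n^{−j}} for each j ∉ S, and put g = Σ_{j ∈ S} (n^j + n^{j+1})·(j + 1) + Σ_{j ∉ S} ( n^{j+1}·(j + 1 + n^{−j}) + n^j·c(j) ). Then ⌊(Δ_u − g)/(n + 1)⌋ = k. -/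
/-!
For `j ∈ S` the two cost factors of `Δu` and `g` differ by `n⁻ʲ`, so the term contributes
`(nʲ + nʲ⁺¹) n⁻ʲ = n + 1`; for `j ∉ S` the terms differ by `nʲ (j + 1 + n⁻ʲ - c j) ∈ {0, 1}`.
Hence `Δu - g = k (n + 1) + T` with `0 ≤ T ≤ n - k < n + 1`, and the floor recovers `k`.
-/

open Finset

lemma Int.floor_intCast_mul_add_div {m t : ℝ} (k : ℤ) (hm : 0 < m) (ht₀ : 0 ≤ t) (htm : t < m) :
    ⌊(k * m + t) / m⌋ = k := by
  rw [add_div, mul_div_cancel_right₀ _ hm.ne', Int.floor_intCast_add, add_eq_left,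
    Int.floor_eq_zero_iff]
  exact ⟨div_nonneg ht₀ hm.le, (div_lt_one hm).2 htm⟩

lemma Finset.sum_sub_sum_add_sum_sdiff {ι G : Type*} [DecidableEq ι] [AddCommGroup G]
    {s t : Finset ι} (h : t ⊆ s) (f g₁ g₂ : ι → G) :
    ∑ i ∈ s, f i - (∑ i ∈ t, g₁ i + ∑ i ∈ s \ t, g₂ i) =
      ∑ i ∈ t, (f i - g₁ i) + ∑ i ∈ s \ t, (f i - g₂ i) := by
  rw [← sum_sdiff h, sum_sub_distrib, sum_sub_distrib]
  abel

lemma pow_add_pow_succ_mul_inv_pow {r : ℝ} (hr : r ≠ 0) (j : ℕ) (a : ℝ) :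
    (r ^ j + r ^ (j + 1)) * (a + (r ^ j)⁻¹) - (r ^ j + r ^ (j + 1)) * a = r + 1 := by
  field_simp
  ring

lemma mul_add_inv_sub_mem_Icc {x a c : ℝ} (hc : c = a ∨ c = a + x⁻¹) :
    x * (a + x⁻¹ - c) ∈ Set.Icc 0 1 := by
  rcases hc with rfl | rfl
  · by_cases hx : x = 0 <;> simp [hx]
  · simp

theorem lemma1_floor_general (n : ℕ) (S : Finset ℕ) (hS : S ⊆ Finset.Icc 1 n)
    (k : ℕ) (hk : S.card = k) (c : ℕ → ℝ)
    (hc : ∀ j ∈ Finset.Icc 1 n \ S,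
      c j = (j : ℝ) + 1 ∨ c j = (j : ℝ) + 1 + ((n : ℝ) ^ j)⁻¹) :
    let Δu : ℝ := ∑ j ∈ Finset.Icc 1 n,
      ((n : ℝ) ^ j + (n : ℝ) ^ (j + 1)) * ((j : ℝ) + 1 + ((n : ℝ) ^ j)⁻¹)
    let g : ℝ := (∑ j ∈ S, ((n : ℝ) ^ j + (n : ℝ) ^ (j + 1)) * ((j : ℝ) + 1))
      + ∑ j ∈ Finset.Icc 1 n \ S,
          ((n : ℝ) ^ (j + 1) * ((j : ℝ) + 1 + ((n : ℝ) ^ j)⁻¹) + (n : ℝ) ^ j * c j)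
    ⌊(Δu - g) / ((n : ℝ) + 1)⌋ = (k : ℤ) := by
  intro Δu g
  set T : ℝ := ∑ j ∈ Icc 1 n \ S, (n : ℝ) ^ j * ((j : ℝ) + 1 + ((n : ℝ) ^ j)⁻¹ - c j)
  have hterm : ∀ j ∈ Icc 1 n \ S, (n : ℝ) ^ j * ((j : ℝ) + 1 + ((n : ℝ) ^ j)⁻¹ - c j) ∈
      Set.Icc 0 1 := fun j hj => mul_add_inv_sub_mem_Icc (hc j hj)
  have hgap : Δu - g = (k : ℤ) * ((n : ℝ) + 1) + T := by
    rw [sum_sub_sum_add_sum_sdiff hS]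
    congr 1
    · rw [sum_congr rfl fun j hj => pow_add_pow_succ_mul_inv_pow ?_ j _, sum_const, hk,
        nsmul_eq_mul, Int.cast_natCast]
      have := mem_Icc.1 (hS hj)
      exact Nat.cast_ne_zero.2 (by omega)
    · exact sum_congr rfl fun j _ => by ring
  have hT_le : T ≤ n := calc
    T ≤ ∑ _j ∈ Icc 1 n \ S, (1 : ℝ) := sum_le_sum fun j hj => (hterm j hj).2
    _ = #(Icc 1 n \ S) := by simp
    _ ≤ n := by exact_mod_cast (card_le_card sdiff_subset).trans_eq (Nat.card_Icc 1 n)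
  rw [hgap]
  exact Int.floor_intCast_mul_add_div k (by positivity)
    (sum_nonneg fun j hj => (hterm j hj).1) (by linarith)

/-- Conclusion of Lemma 1 of the NP-hardness reduction: the number `k` of unsatisfied
clauses can be recovered from the GGI value `g` as `⌊(Δu − g)/(n+1)⌋`. -/
theorem lemma1_floor (n : ℕ) (hn : 2 ≤ n) (S : Finset ℕ) (hS : S ⊆ Finset.Icc 1 n)
    (k : ℕ) (hk : S.card = k) (c : ℕ → ℝ)
    (hc : ∀ j ∈ Finset.Icc 1 n \ S,
      c j = (j : ℝ) + 1 ∨ c j = (j : ℝ) + 1 + ((n : ℝ) ^ j)⁻¹) :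
    let Δu : ℝ := ∑ j ∈ Finset.Icc 1 n,
      ((n : ℝ) ^ j + (n : ℝ) ^ (j + 1)) * ((j : ℝ) + 1 + ((n : ℝ) ^ j)⁻¹)
    let g : ℝ := (∑ j ∈ S, ((n : ℝ) ^ j + (n : ℝ) ^ (j + 1)) * ((j : ℝ) + 1))
      + ∑ j ∈ Finset.Icc 1 n \ S,
          ((n : ℝ) ^ (j + 1) * ((j : ℝ) + 1 + ((n : ℝ) ^ j)⁻¹) + (n : ℝ) ^ j * c j)
    ⌊(Δu - g) / ((n : ℝ) + 1)⌋ = (k : ℤ) :=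
  lemma1_floor_general n S hS k hk c hc
end
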